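/- For every λ > 0 the selection objective h(U) = (1/(|N|·K)) Σ_{n∈N} M^K(n, B_s ∪ U) − (λ/(|N|·(|B_s|+m))) Σ_{n∈N} Σ_{u∈B_s∪U} f(n,u) is a submodular set function on the subsets of B_u (being the difference of a submodular function and a modular function); hence the base-class selection problem max{ h(U) : U ⊆ B_u, |U| = m } is a (possibly non-monotone) submodular maximization with exact cardinality constraint. -/

import Mathlib

/-!
For nonnegative weights, `M^K(A)` is the largest weight of a subset of `A` with at most `K`
elements, and this maximum is attained. Given optimal sets `X` for `S ∪ T` and `Y` for `S ∩ T`,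
the elements of `X` and `Y` can be redistributed into a subset of `S` and a subset of `T`, each
with at most `K` elements, without changing the total weight; hence
`M^K(S ∩ T) + M^K(S ∪ T) ≤ M^K(S) + M^K(T)`. The penalty term of `h` is modular.
-/

/-- The max-K-sum `M^K(A)`: the sum of the `K` largest values of `w` over the
finite set `A` (the sum of all of them if `|A| < K`). -/
noncomputable def topKSum {α : Type*} (w : α → ℝ) (K : ℕ) (A : Finset α) : ℝ :=
  (((A.val.map w).sort (· ≥ ·)).take K).sum

/-- The selection objective
`h(U) = (1/(|N|·K)) Σ_{n∈N} M^K(n, B_s ∪ U) − (λ/(|N|·(|B_s|+m))) Σ_{n∈N} Σ_{u∈B_s∪U} f(n,u)`. -/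
noncomputable def selObj {β ν : Type*} [DecidableEq β]
    (N : Finset ν) (f : ν → β → ℝ) (K : ℕ) (Bs : Finset β) (lam : ℝ) (m : ℕ)
    (U : Finset β) : ℝ :=
  (1 / ((N.card : ℝ) * (K : ℝ))) * ∑ n ∈ N, topKSum (f n) K (Bs ∪ U)
    - (lam / ((N.card : ℝ) * ((Bs.card : ℝ) + (m : ℝ)))) * ∑ n ∈ N, ∑ u ∈ Bs ∪ U, f n u

namespace List

variable {M : Type*} [AddCommMonoid M] [PartialOrder M] [IsOrderedAddMonoid M]

theorem sum_take_le_sum_take_cons {a : M} {l : List M} (ha : ∀ x ∈ l, x ≤ a) {k : ℕ}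
    (hk : k ≤ l.length) : (l.take k).sum ≤ ((a :: l).take k).sum := by
  cases k with
  | zero => simp
  | succ k =>
    rw [take_succ_cons, sum_cons, sum_take_succ l k (by omega), add_comm a]
    exact add_le_add_right (ha _ (getElem_mem _)) _

theorem Sublist.sum_le_sum_take {s l : List M} (h : s.Sublist l) (hl : l.Pairwise (· ≥ ·)) :
    s.sum ≤ (l.take s.length).sum := by
  induction h with
  | slnil => simp
  | cons a h ih =>
    exact (ih hl.of_cons).trans
      (sum_take_le_sum_take_cons (fun _ hx => rel_of_pairwise_cons hl hx) h.length_le)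
  | cons_cons a _ ih =>
    simpa only [length_cons, take_succ_cons, sum_cons] using add_le_add_right (ih hl.of_cons) a

end List

theorem Multiset.exists_le_map_eq_of_le_map {α β : Type*} {f : α → β} {s : Multiset β}
    {t : Multiset α} (h : s ≤ t.map f) : ∃ u ≤ t, u.map f = s := by
  induction s using Quotient.inductionOn
  induction t using Quotient.inductionOn
  obtain ⟨l, hperm, hsub⟩ := Multiset.coe_le.mp h
  obtain ⟨l', hl', rfl⟩ := List.sublist_map_iff.mp hsub
  exact ⟨l', Multiset.coe_le.mpr hl'.subperm, Multiset.coe_eq_coe.mpr hperm⟩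

section Redistribution

variable {α M : Type*} [DecidableEq α] [AddCommMonoid M] {K : ℕ}

theorem exists_redistribution_of_subset_union_of_subset_inter (w : α → M) {S T X Y : Finset α}
    (hX : X ⊆ S ∪ T) (hY : Y ⊆ S ∩ T) (hXK : X.card ≤ K) (hYK : Y.card ≤ K) :
    ∃ P ⊆ S, ∃ Q ⊆ T, P.card ≤ K ∧ Q.card ≤ K ∧
      ∑ a ∈ P, w a + ∑ a ∈ Q, w a = ∑ a ∈ X, w a + ∑ a ∈ Y, w a := by
  have hYS : Y ⊆ S := hY.trans Finset.inter_subset_left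
  -- `P` tops up `X ∩ S` with as much of `Y \ X` as fits; the rest of `Y` goes with `X \ S`.
  obtain ⟨R, hR, hRcard⟩ :=
    Finset.exists_subset_card_eq (min_le_left (Y \ X).card (K - (X ∩ S).card))
  have hRY : R ⊆ Y := hR.trans Finset.sdiff_subset
  have hdisjP : Disjoint (X ∩ S) R :=
    Finset.disjoint_of_subset_left Finset.inter_subset_left
      (Finset.disjoint_of_subset_right hR Finset.disjoint_sdiff)
  have hdisjQ : Disjoint (X \ S) (Y \ R) :=
    Finset.disjoint_of_subset_right (Finset.sdiff_subset.trans hYS) Finset.sdiff_disjoint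
  refine ⟨X ∩ S ∪ R, Finset.union_subset Finset.inter_subset_right (hRY.trans hYS),
    X \ S ∪ Y \ R, Finset.union_subset ?_ (Finset.sdiff_subset.trans
      (hY.trans Finset.inter_subset_right)), ?_, ?_, ?_⟩
  · intro a ha
    obtain ⟨haX, haS⟩ := Finset.mem_sdiff.mp ha
    exact (Finset.mem_union.mp (hX haX)).resolve_left haS
  · have := Finset.card_le_card (Finset.inter_subset_left : X ∩ S ⊆ X)
    rw [Finset.card_union_of_disjoint hdisjP]
    omega
  · have hsplitX := Finset.card_inter_add_card_sdiff X S
    have hsplitY := Finset.card_inter_add_card_sdiff Y X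
    have hYX : (Y ∩ X).card ≤ (X ∩ S).card :=
      Finset.card_le_card fun a ha => by
        obtain ⟨haY, haX⟩ := Finset.mem_inter.mp ha
        exact Finset.mem_inter.mpr ⟨haX, hYS haY⟩
    rw [Finset.card_union_of_disjoint hdisjQ, Finset.card_sdiff_of_subset hRY]
    have := Finset.card_le_card hRY
    omega
  · rw [Finset.sum_union hdisjP, Finset.sum_union hdisjQ,
      ← Finset.sum_inter_add_sum_sdiff X S, ← Finset.sum_sdiff hRY]
    abel

end Redistribution

section TopKSum

variable {α : Type*}

theorem exists_subset_card_le_sum_eq_topKSum (w : α → ℝ) (K : ℕ) (A : Finset α) :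
    ∃ T ⊆ A, T.card ≤ K ∧ ∑ t ∈ T, w t = topKSum w K A := by
  have htake : (↑(((A.val.map w).sort (· ≥ ·)).take K) : Multiset ℝ) ≤ A.val.map w := by
    conv_rhs => rw [← Multiset.sort_eq (A.val.map w) (· ≥ ·)]
    exact Multiset.coe_le.mpr (List.take_sublist _ _).subperm
  obtain ⟨u, hu, hmap⟩ := Multiset.exists_le_map_eq_of_le_map htake
  refine ⟨⟨u, Multiset.nodup_of_le hu A.nodup⟩, Finset.val_le_iff.mp hu, ?_, ?_⟩
  · calc Multiset.card u = Multiset.card (u.map w) := (Multiset.card_map w u).symm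
      _ ≤ K := by rw [hmap, Multiset.coe_card]; exact List.length_take_le _ _
  · change (u.map w).sum = _
    rw [hmap, Multiset.sum_coe, topKSum]

theorem sum_le_topKSum {w : α → ℝ} {K : ℕ} {A T : Finset α} (hTA : T ⊆ A) (hTK : T.card ≤ K)
    (hw : ∀ a ∈ A, 0 ≤ w a) : ∑ t ∈ T, w t ≤ topKSum w K A := by
  set lT := (T.val.map w).sort (· ≥ ·)
  set lA := (A.val.map w).sort (· ≥ ·)
  have hlA : ∀ x ∈ lA, 0 ≤ x := by
    intro x hx
    obtain ⟨a, ha, rfl⟩ := Multiset.mem_map.mp ((Multiset.mem_sort _).mp hx)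
    exact hw a ha
  have hsub : lT.Sublist lA := by
    refine List.sublist_of_subperm_of_pairwise ?_ (Multiset.pairwise_sort _ _)
      (Multiset.pairwise_sort _ _)
    rw [← Multiset.coe_le, Multiset.sort_eq, Multiset.sort_eq]
    exact Multiset.map_le_map (Finset.val_le_iff.mpr hTA)
  have hlen : lT.length ≤ K := by
    rwa [Multiset.length_sort, Multiset.card_map]
  calc ∑ t ∈ T, w t = lT.sum := by
        rw [Finset.sum_eq_multiset_sum, ← Multiset.sum_coe, Multiset.sort_eq]
    _ ≤ (lA.take lT.length).sum := hsub.sum_le_sum_take (Multiset.pairwise_sort _ _)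
    _ ≤ (lA.take K).sum :=
        (List.take_sublist_take_left hlen).sum_le_sum fun x hx => hlA x (List.mem_of_mem_take hx)

variable [DecidableEq α]

theorem topKSum_inter_add_topKSum_union_le {w : α → ℝ} {K : ℕ} {S T : Finset α}
    (hw : ∀ a ∈ S ∪ T, 0 ≤ w a) :
    topKSum w K (S ∩ T) + topKSum w K (S ∪ T) ≤ topKSum w K S + topKSum w K T := by
  obtain ⟨X, hX, hXK, hXsum⟩ := exists_subset_card_le_sum_eq_topKSum w K (S ∪ T)
  obtain ⟨Y, hY, hYK, hYsum⟩ := exists_subset_card_le_sum_eq_topKSum w K (S ∩ T)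
  obtain ⟨P, hPS, Q, hQT, hPK, hQK, hsum⟩ :=
    exists_redistribution_of_subset_union_of_subset_inter w hX hY hXK hYK
  have hP := sum_le_topKSum hPS hPK fun a ha => hw a (Finset.mem_union_left T ha)
  have hQ := sum_le_topKSum hQT hQK fun a ha => hw a (Finset.mem_union_right S ha)
  linarith

end TopKSum

theorem selObj_lambda_pos_submodular_general {β ν : Type*} [DecidableEq β]
    (Bu Bs : Finset β) (N : Finset ν) (f : ν → β → ℝ) (K m : ℕ) (lam : ℝ)
    (hf : ∀ n ∈ N, ∀ b ∈ Bs ∪ Bu, 0 ≤ f n b) :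
    ∀ A B : Finset β, A ⊆ Bu → B ⊆ Bu →
      selObj N f K Bs lam m (A ∩ B) + selObj N f K Bs lam m (A ∪ B) ≤
        selObj N f K Bs lam m A + selObj N f K Bs lam m B := by
  intro A B hA hB
  have hinter : Bs ∪ A ∩ B = (Bs ∪ A) ∩ (Bs ∪ B) := Finset.union_inter_distrib_left Bs A B
  have hunion : Bs ∪ (A ∪ B) = (Bs ∪ A) ∪ (Bs ∪ B) := Finset.union_union_distrib_left Bs A B
  have hsub : ∀ n ∈ N, topKSum (f n) K (Bs ∪ A ∩ B) + topKSum (f n) K (Bs ∪ (A ∪ B)) ≤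
      topKSum (f n) K (Bs ∪ A) + topKSum (f n) K (Bs ∪ B) := by
    intro n hn
    rw [hinter, hunion]
    refine topKSum_inter_add_topKSum_union_le fun b hb => hf n hn b ?_
    have hAB : Bs ∪ A ∪ (Bs ∪ B) ⊆ Bs ∪ Bu :=
      Finset.union_subset (Finset.union_subset_union_right hA)
        (Finset.union_subset_union_right hB)
    exact hAB hb
  have hmod : ∀ n ∈ N, ∑ u ∈ Bs ∪ A ∩ B, f n u + ∑ u ∈ Bs ∪ (A ∪ B), f n u =
      ∑ u ∈ Bs ∪ A, f n u + ∑ u ∈ Bs ∪ B, f n u := by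
    intro n _
    rw [hinter, hunion, add_comm]
    exact Finset.sum_union_inter
  have hS := Finset.sum_le_sum hsub
  have hL := Finset.sum_congr rfl hmod
  simp only [Finset.sum_add_distrib] at hS hL
  have hc : (0 : ℝ) ≤ 1 / ((N.card : ℝ) * (K : ℝ)) := by positivity
  unfold selObj
  linarith [mul_le_mul_of_nonneg_left hS hc,
    congrArg ((lam / ((N.card : ℝ) * ((Bs.card : ℝ) + (m : ℝ)))) * ·) hL]

/-- For every `λ > 0`, the selection objective `h` is a submodular set function
on the subsets of `B_u`. -/
theorem selObj_lambda_pos_submodular {β ν : Type*} [DecidableEq β]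
    (Bu Bs : Finset β) (N : Finset ν) (f : ν → β → ℝ) (K m : ℕ) (lam : ℝ)
    (hBu : Bu.Nonempty) (hN : N.Nonempty) (hdisj : Disjoint Bs Bu)
    (hK : 1 ≤ K) (hm : 1 ≤ m) (hlam : 0 < lam)
    (hf : ∀ n ∈ N, ∀ b ∈ Bs ∪ Bu, 0 ≤ f n b) :
    ∀ A B : Finset β, A ⊆ Bu → B ⊆ Bu →
      selObj N f K Bs lam m (A ∩ B) + selObj N f K Bs lam m (A ∪ B) ≤
        selObj N f K Bs lam m A + selObj N f K Bs lam m B :=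
  selObj_lambda_pos_submodular_general Bu Bs N f K m lam hf
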